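/- arXiv:2011.02509 — 4 statements merged into one kernel-verified Lean document; each statement's English description precedes it below -/
import Mathlib

section
/- If A ∈ ℝ^{m×n} and H ∈ ℝ^{n×m} satisfy A H A = A and rank(H) = rank(A), then H A H = H. -/
/-- A generalized inverse (P1) with `rank H = rank A` is reflexive (satisfies P2). -/
theorem reflexive_of_rank_eq {m n : ℕ} (A : Matrix (Fin m) (Fin n) ℝ)
    (H : Matrix (Fin n) (Fin m) ℝ) (hP1 : A * H * A = A) (hrank : H.rank = A.rank) :
    H * A * H = H := by
  -- rank (H*A) = rank H
  have h1 : (H * A).rank = H.rank := by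
    have hle : (H * A).rank ≤ H.rank := Matrix.rank_mul_le_left H A
    have hge : A.rank ≤ (H * A).rank := by
      calc A.rank = (A * (H * A)).rank := by rw [← Matrix.mul_assoc, hP1]
        _ ≤ (H * A).rank := Matrix.rank_mul_le_right A (H * A)
    omega
  -- range equality
  have hle : LinearMap.range (H * A).mulVecLin ≤ LinearMap.range H.mulVecLin := by
    rw [Matrix.mulVecLin_mul]
    exact LinearMap.range_comp_le_range _ _
  have hrange : LinearMap.range (H * A).mulVecLin = LinearMap.range H.mulVecLin :=
    Submodule.eq_of_le_of_finrank_eq hle h1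
  have hidem : (H * A) * (H * A) = H * A := by
    calc (H * A) * (H * A) = H * (A * H * A) := by simp [Matrix.mul_assoc]
      _ = H * A := by rw [hP1]
  suffices key : ∀ x, (H * A * H).mulVec x = H.mulVec x by
    ext i j
    have := congrFun (key (Pi.single j 1)) i
    simpa using this
  intro x
  have hx : H.mulVec x ∈ LinearMap.range (H * A).mulVecLin := by
    rw [hrange]; exact ⟨x, rfl⟩
  obtain ⟨v, hv⟩ := hx
  simp only [Matrix.mulVecLin_apply] at hv
  calc (H * A * H).mulVec x = (H * A).mulVec (H.mulVec x) := by
        rw [← Matrix.mulVec_mulVec]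
    _ = (H * A).mulVec ((H * A).mulVec v) := by rw [hv]
    _ = ((H * A) * (H * A)).mulVec v := Matrix.mulVec_mulVec ..
    _ = (H * A).mulVec v := by rw [hidem]
    _ = H.mulVec x := hv
end

section
/- Let A ∈ ℝ^{m×n}, let G ∈ ℝ^{n×m} satisfy the four Moore–Penrose properties A G A = A, G A G = G, (A G)ᵀ = A G, (G A)ᵀ = G A (so G is the Moore–Penrose pseudoinverse of A), and let H ∈ ℝ^{n×m} satisfy A H A = A and (A H)ᵀ = A H. Then H A H = H if and only if H A G = H; that is, under (P1) and (P3), the reflexivity property (P2) is equivalent to the linear equation H A A† = H. -/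
open Matrix

/-- For an ah-symmetric generalized inverse `H` of `A` (P1 and P3), and `G` the Moore–Penrose
pseudoinverse of `A`, reflexivity (P2) is equivalent to the linear equation `H A G = H`. -/
theorem reflexive_iff_linear_eq {m n : ℕ} (A : Matrix (Fin m) (Fin n) ℝ)
    (G H : Matrix (Fin n) (Fin m) ℝ)
    (hGP1 : A * G * A = A) (hGP2 : G * A * G = G)
    (hGP3 : (A * G)ᵀ = A * G) (hGP4 : (G * A)ᵀ = G * A)
    (hHP1 : A * H * A = A) (hHP3 : (A * H)ᵀ = A * H) :
    H * A * H = H ↔ H * A * G = H := by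
  have h1 : A * G * (A * H) = A * H := by rw [← Matrix.mul_assoc, hGP1]
  have h2 : A * H * (A * G) = A * G := by rw [← Matrix.mul_assoc, hHP1]
  -- transpose of h2 : A * G = A * G * (A * H)
  have h3 : A * G * (A * H) = A * G := by
    have := congrArg Matrix.transpose h2
    simpa [Matrix.transpose_mul, hGP3, hHP3] using this
  have key : A * H = A * G := by rw [← h1, h3]
  constructor
  · intro h
    rw [Matrix.mul_assoc, ← key, ← Matrix.mul_assoc, h]
  · intro h
    rw [Matrix.mul_assoc, key, ← Matrix.mul_assoc, h]
end

section
/- Let H ∈ ℝ^{n×m} be a real matrix, and suppose W₁ ∈ ℝ^{n×n} and W₂ ∈ ℝ^{m×m} are such that the block matrix [[W₁, H], [Hᵀ, W₂]] ∈ ℝ^{(n+m)×(n+m)} is positive semidefinite. Then ½(trace(W₁) + trace(W₂)) ≥ trace((Hᵀ H)^{1/2}), where (Hᵀ H)^{1/2} is the positive semidefinite square root of the positive semidefinite matrix Hᵀ H. -/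
/-! Let `U = H (HᴴH)^{+1/2}` be the partial isometry of the polar decomposition of `H`, so that
`UᴴH = (HᴴH)^{1/2}` and `UUᴴ` is an orthogonal projection. Conjugating the positive semidefinite
block matrix by the column `[U; -1]` and taking traces gives
`2 tr (HᴴH)^{1/2} ≤ tr (UᴴW₁U) + tr W₂`, and `tr (UᴴW₁U) = tr (W₁UUᴴ) ≤ tr W₁` because `W₁ ⪰ 0`
and `1 - UUᴴ` is again a projection. -/

open Matrix

open scoped ComplexOrder in
/-- The positive semidefinite square root of a positive semidefinite matrix
(the definition `Matrix.PosSemidef.sqrt` of the older Mathlib, removed since). -/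
noncomputable def Matrix.PosSemidef.sqrt {n : Type*} [Fintype n] [DecidableEq n] {𝕜 : Type*}
    [RCLike 𝕜] {A : Matrix n n 𝕜} (hA : A.PosSemidef) : Matrix n n 𝕜 :=
  hA.1.eigenvectorUnitary.1 * diagonal ((↑) ∘ (√·) ∘ hA.1.eigenvalues) *
  (star hA.1.eigenvectorUnitary : Matrix n n 𝕜)

/-- `Hᵀ H` is positive semidefinite. -/
theorem transpose_mul_self_posSemidef {n m : ℕ} (H : Matrix (Fin n) (Fin m) ℝ) :
    (Hᵀ * H).PosSemidef := by
  simpa [Matrix.conjTranspose_eq_transpose_of_trivial] using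
    Matrix.posSemidef_conjTranspose_mul_self H

open scoped ComplexOrder

namespace Matrix

variable {𝕜 : Type*} [RCLike 𝕜] {ι κ : Type*} [Fintype ι] [Fintype κ]

theorem PosSemidef.trace_fromBlocks_cross_le {ν : Type*} [Fintype ν] {W₁ : Matrix ι ι 𝕜}
    {W₂ : Matrix κ κ 𝕜} {H : Matrix ι κ 𝕜} (h : (fromBlocks W₁ H Hᴴ W₂).PosSemidef)
    (X : Matrix ι ν 𝕜) (Y : Matrix κ ν 𝕜) :
    (Xᴴ * H * Y).trace + (Yᴴ * Hᴴ * X).trace ≤ (Xᴴ * W₁ * X).trace + (Yᴴ * W₂ * Y).trace := by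
  have hconj : (fromRows X (-Y))ᴴ * fromBlocks W₁ H Hᴴ W₂ * fromRows X (-Y) =
      Xᴴ * W₁ * X - Xᴴ * H * Y - Yᴴ * Hᴴ * X + Yᴴ * W₂ * Y := by
    rw [conjTranspose_fromRows_eq_fromCols_conjTranspose, Matrix.mul_assoc,
      fromBlocks_mul_fromRows, fromCols_mul_fromRows]
    simp only [conjTranspose_neg, Matrix.mul_add, Matrix.mul_neg, Matrix.neg_mul,
      Matrix.mul_assoc]
    abel
  have := (h.conjTranspose_mul_mul_same (fromRows X (-Y))).trace_nonneg
  rw [hconj, trace_add, trace_sub, trace_sub] at this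
  linear_combination this

theorem PosSemidef.trace_conjTranspose_mul_mul_le [DecidableEq ι] {W : Matrix ι ι 𝕜}
    (hW : W.PosSemidef) {X : Matrix ι κ 𝕜} (hX : X * Xᴴ * X = X) :
    (Xᴴ * W * X).trace ≤ W.trace := by
  set Q := 1 - X * Xᴴ
  have hQ : Q * Qᴴ = Q := by
    simp only [Q, conjTranspose_sub, conjTranspose_one, conjTranspose_mul,
      conjTranspose_conjTranspose, Matrix.sub_mul, Matrix.mul_sub, Matrix.one_mul,
      Matrix.mul_one, ← Matrix.mul_assoc, hX]
    abel
  have := (hW.conjTranspose_mul_mul_same Q).trace_nonneg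
  rw [trace_mul_cycle, hQ, Matrix.sub_mul, Matrix.one_mul, trace_sub, Matrix.mul_assoc,
    trace_mul_comm X] at this
  exact sub_nonneg.mp this

variable [DecidableEq κ]

theorem PosSemidef.sqrt_eq_cfc {A : Matrix κ κ 𝕜} (hA : A.PosSemidef) :
    hA.sqrt = cfc Real.sqrt A := by
  rw [hA.1.cfc_eq, IsHermitian.cfc, Unitary.conjStarAlgAut_apply]
  rfl

/-- Since `(√0)⁻¹ = 0`, the factor `cfc (fun x ↦ (√x)⁻¹) (Hᴴ * H)` is the Moore–Penrose
pseudo-inverse of `√(Hᴴ * H)`. -/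
noncomputable def polarFactor (H : Matrix ι κ 𝕜) : Matrix ι κ 𝕜 :=
  H * cfc (fun x ↦ (√x)⁻¹) (Hᴴ * H)

theorem conjTranspose_polarFactor_mul (H : Matrix ι κ 𝕜) :
    (polarFactor H)ᴴ * H = cfc Real.sqrt (Hᴴ * H) := by
  have hfin := (Hᴴ * H).finite_real_spectrum
  have hsa : IsSelfAdjoint (Hᴴ * H) := isHermitian_conjTranspose_mul_self H
  have hsymm : (cfc (fun x ↦ (√x)⁻¹) (Hᴴ * H))ᴴ = cfc (fun x ↦ (√x)⁻¹) (Hᴴ * H) :=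
    cfc_predicate (fun x ↦ (√x)⁻¹) (Hᴴ * H)
  calc (polarFactor H)ᴴ * H = cfc (fun x ↦ (√x)⁻¹) (Hᴴ * H) * cfc id (Hᴴ * H) := by
        rw [polarFactor, conjTranspose_mul, hsymm, cfc_id ℝ (Hᴴ * H) hsa, Matrix.mul_assoc]
    _ = cfc (fun x ↦ (√x)⁻¹ * x) (Hᴴ * H) :=
        (cfc_mul _ _ _ (hfin.continuousOn _) (hfin.continuousOn _)).symm
    _ = cfc Real.sqrt (Hᴴ * H) := by
        congr 1
        funext x
        rw [inv_mul_eq_div, Real.div_sqrt]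

theorem polarFactor_mul_conjTranspose_mul (H : Matrix ι κ 𝕜) :
    polarFactor H * (polarFactor H)ᴴ * polarFactor H = polarFactor H := by
  have hfin := (Hᴴ * H).finite_real_spectrum
  calc polarFactor H * (polarFactor H)ᴴ * polarFactor H
      = H * (cfc (fun x ↦ (√x)⁻¹) (Hᴴ * H) * cfc Real.sqrt (Hᴴ * H) *
          cfc (fun x ↦ (√x)⁻¹) (Hᴴ * H)) := by
        rw [polarFactor, Matrix.mul_assoc, ← conjTranspose_polarFactor_mul, polarFactor]
        simp only [Matrix.mul_assoc]
    _ = H * cfc (fun x ↦ (√x)⁻¹ * √x * (√x)⁻¹) (Hᴴ * H) := by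
        rw [cfc_mul _ _ _ (hfin.continuousOn _) (hfin.continuousOn _),
          cfc_mul _ _ _ (hfin.continuousOn _) (hfin.continuousOn _)]
    _ = polarFactor H := by
        rw [polarFactor]
        congr 2
        funext x
        simpa using mul_inv_mul_cancel (√x)⁻¹

end Matrix

/-- If the block matrix `[[W₁, H], [Hᵀ, W₂]]` is positive semidefinite, then
`½(trace W₁ + trace W₂) ≥ trace ((Hᵀ H)^{1/2})`, the latter being the nuclear norm of `H`. -/
theorem nuclear_norm_le_of_block_posSemidef {n m : ℕ} (H : Matrix (Fin n) (Fin m) ℝ)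
    (W₁ : Matrix (Fin n) (Fin n) ℝ) (W₂ : Matrix (Fin m) (Fin m) ℝ)
    (hPSD : (Matrix.fromBlocks W₁ H Hᵀ W₂).PosSemidef) :
    (transpose_mul_self_posSemidef H).sqrt.trace ≤ (W₁.trace + W₂.trace) / 2 := by
  have hsqrt : (transpose_mul_self_posSemidef H).sqrt = (polarFactor H)ᵀ * H := by
    rw [PosSemidef.sqrt_eq_cfc, ← conjTranspose_eq_transpose_of_trivial H,
      ← conjTranspose_polarFactor_mul, conjTranspose_eq_transpose_of_trivial]
  have hcross := (conjTranspose_eq_transpose_of_trivial H ▸ hPSD).trace_fromBlocks_cross_le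
    (polarFactor H) 1
  have hW₁ : W₁.PosSemidef := hPSD.submatrix Sum.inl
  have hcontract := hW₁.trace_conjTranspose_mul_mul_le (polarFactor_mul_conjTranspose_mul H)
  have htr : (Hᵀ * polarFactor H).trace = ((polarFactor H)ᵀ * H).trace := by
    rw [← trace_transpose, transpose_mul, transpose_transpose]
  simp only [conjTranspose_eq_transpose_of_trivial, transpose_one, Matrix.one_mul,
    Matrix.mul_one] at hcross hcontract
  rw [hsqrt]
  linarith
end

section
/- Let A ∈ ℝ^{m×n} and let G ∈ ℝ^{n×m} satisfy the four Moore–Penrose properties A G A = A, G A G = G, (A G)ᵀ = A G, (G A)ᵀ = G A. Then the set of matrices H ∈ ℝ^{n×m} satisfying A H A = A, H A H = H, and (A H)ᵀ = A H coincides with the set of matrices H satisfying A H A = A, (A H)ᵀ = A H, and the linear equation H A G = H. -/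
open Matrix

lemma AG_eq_AH {m n : ℕ} (A : Matrix (Fin m) (Fin n) ℝ)
    (G H : Matrix (Fin n) (Fin m) ℝ)
    (hGP1 : A * G * A = A) (hGP3 : (A * G)ᵀ = A * G)
    (hP1 : A * H * A = A) (hP3 : (A * H)ᵀ = A * H) : A * G = A * H := by
  calc A * G = (A * H * A) * G := by rw [hP1]
    _ = (A * H) * (A * G) := by rw [Matrix.mul_assoc]
    _ = (A * H)ᵀ * (A * G)ᵀ := by rw [hP3, hGP3]
    _ = ((A * G) * (A * H))ᵀ := by rw [← Matrix.transpose_mul]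
    _ = ((A * G * A) * H)ᵀ := by simp [Matrix.mul_assoc]
    _ = (A * H)ᵀ := by rw [hGP1]
    _ = A * H := hP3

/-- Given the Moore–Penrose pseudoinverse `G` of `A`, the set of ah-symmetric reflexive
generalized inverses of `A` coincides with the set of ah-symmetric generalized inverses
satisfying the linear equation `H A G = H`. -/
theorem ah_symmetric_reflexive_set_eq {m n : ℕ} (A : Matrix (Fin m) (Fin n) ℝ)
    (G : Matrix (Fin n) (Fin m) ℝ)
    (hGP1 : A * G * A = A) (hGP2 : G * A * G = G)
    (hGP3 : (A * G)ᵀ = A * G) (hGP4 : (G * A)ᵀ = G * A) :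
    {H : Matrix (Fin n) (Fin m) ℝ | A * H * A = A ∧ H * A * H = H ∧ (A * H)ᵀ = A * H}
      = {H : Matrix (Fin n) (Fin m) ℝ | A * H * A = A ∧ (A * H)ᵀ = A * H ∧ H * A * G = H} := by
  ext H
  simp only [Set.mem_setOf_eq]
  constructor
  · rintro ⟨hP1, hP2, hP3⟩
    refine ⟨hP1, hP3, ?_⟩
    have h := AG_eq_AH A G H hGP1 hGP3 hP1 hP3
    calc H * A * G = H * (A * G) := by rw [Matrix.mul_assoc]
      _ = H * (A * H) := by rw [h]
      _ = H * A * H := by rw [Matrix.mul_assoc]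
      _ = H := hP2
  · rintro ⟨hP1, hP3, hlin⟩
    refine ⟨hP1, ?_, hP3⟩
    have h := AG_eq_AH A G H hGP1 hGP3 hP1 hP3
    calc H * A * H = H * (A * H) := by rw [Matrix.mul_assoc]
      _ = H * (A * G) := by rw [h]
      _ = H * A * G := by rw [Matrix.mul_assoc]
      _ = H := hlin
end
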